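/- Let n ≥ 1, let N ≡ 2 (mod 4) with N ≥ 6, and let μ ∈ ℤ^n. Then 2^n · Σ_{λ∈X_{N/2}} q^{(λ,λ)} S'_{λ,μ} = (Σ_{λ∈X_N} q^{(λ,λ+2ρ)}) · Q_μ · q^{−(μ,μ+2ρ)}, where throughout q^r = exp(2πi r/N). -/

import Mathlib

open Complex Finset

/-- `qp N r = exp(2πi r / N)`, i.e. `q^r` for `q = exp(2πi/N)`. -/
noncomputable def qp (N : ℕ) (r : ℚ) : ℂ :=
  Complex.exp (2 * (Real.pi : ℂ) * Complex.I * (r : ℂ) / (N : ℂ))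

/-- The Weyl vector of `osp(1|2n)`: `ρ_j = n - j + 1/2` for `j = 1, …, n`
(0-indexed: `ρ j = n - j - 1/2`). -/
def rhoV (n : ℕ) : Fin n → ℚ := fun j => (n : ℚ) - (j : ℚ) - 1/2

/-- The standard dot product on `ℚ^n`. -/
def dotp {n : ℕ} (x y : Fin n → ℚ) : ℚ := ∑ j, x j * y j

/-- Coercion of an integer vector to a rational vector. -/
def intC {n : ℕ} (lam : Fin n → ℤ) : Fin n → ℚ := fun j => (lam j : ℚ)

/-- Coercion of an element of `X_M = {0,…,M-1}^n` to a rational vector. -/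
def finC {n M : ℕ} (mu : Fin n → Fin M) : Fin n → ℚ := fun j => ((mu j : ℕ) : ℚ)

/-- The `j`-th standard basis vector of `ℚ^n`. -/
def stdB (n : ℕ) (j : Fin n) : Fin n → ℚ := fun l => if l = j then 1 else 0

/-- The hyperoctahedral group (Weyl group of `osp(1|2n)`): a permutation with signs. -/
abbrev HypOct (n : ℕ) := Equiv.Perm (Fin n) × (Fin n → ℤˣ)

/-- Action of the hyperoctahedral group on `ℚ^n` by signed permutation of coordinates. -/
def Wact {n : ℕ} (σ : HypOct n) (x : Fin n → ℚ) : Fin n → ℚ :=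
  fun j => ((σ.2 j : ℤ) : ℚ) * x (σ.1⁻¹ j)

/-- `ε'(σ) = sgn(π) · ∏_j s_j` for `σ = (π, s)`. -/
def epsW {n : ℕ} (σ : HypOct n) : ℤˣ :=
  Equiv.Perm.sign σ.1 * ∏ j, σ.2 j

/-- `S'_{λ,μ} = Σ_{σ∈W} ε'(σ) q^{2(λ+ρ, σ(μ+ρ))}` (for rational vectors `λ, μ`). -/
noncomputable def Sprime (n N : ℕ) (lam mu : Fin n → ℚ) : ℂ :=
  ∑ σ : HypOct n,
    ((epsW σ : ℤ) : ℂ) * qp N (2 * dotp (lam + rhoV n) (Wact σ (mu + rhoV n)))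

/-- `Q_μ = Σ_{σ∈W} ε'(σ) q^{2(ρ, σ(μ+ρ))}`. -/
noncomputable def Qmu (n N : ℕ) (mu : Fin n → ℤ) : ℂ :=
  ∑ σ : HypOct n,
    ((epsW σ : ℤ) : ℂ) * qp N (2 * dotp (rhoV n) (Wact σ (intC mu + rhoV n)))

/-- Gauss sum `G(N,m) = Σ_{j=0}^{N-1} q^{j(j+m)}` with `q = exp(2πi/N)`. -/
noncomputable def GaussG (N : ℕ) (m : ℤ) : ℂ :=
  ∑ j : Fin N, qp N ((j : ℚ) * ((j : ℚ) + (m : ℚ)))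

/-- `Σ_{μ ∈ X_M} q^{(μ, μ+2ρ)}` where `q = exp(2πi/N)`. -/
noncomputable def sumX (n N M : ℕ) : ℂ :=
  ∑ mu : Fin n → Fin M, qp N (dotp (finC mu) (finC mu + 2 • rhoV n))

/-- `Σ_{λ ∈ X_M} q^{(λ,λ)} S'_{λ,μ}` where `q = exp(2πi/N)`. -/
noncomputable def sumXS (n N M : ℕ) (mu : Fin n → ℤ) : ℂ :=
  ∑ lam : Fin n → Fin M, qp N (dotp (finC lam) (finC lam)) * Sprime n N (finC lam) (intC mu)

/-! For a signed permutation `σ`, the vector `v = σ(μ + ρ)` has coordinates in `ℤ + 1/2` and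
`(v, v) = (μ, μ + 2ρ) + (ρ, ρ)`. Completing the square,
`(λ, λ) + 2(λ + ρ, v) = (λ + v, λ + v) + 2(ρ, v) - (v, v)`, so the sum over `λ` factors into
one-dimensional sums `Σ_a q^{(a + v_j)^2}`. Over a full period `0 ≤ a < N` such a sum does not
depend on the half-odd `v_j`; since `N/2` is odd, shifting `a` by `N/2` changes `(a + v_j)^2` by a
multiple of `N`, so the sum over `0 ≤ a < N/2` is half of it. The same factorization with `v = ρ`
evaluates `Σ_{λ ∈ X_N} q^{(λ, λ + 2ρ)}`. -/

lemma qp_add (N : ℕ) (r s : ℚ) : qp N (r + s) = qp N r * qp N s := by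
  simp only [qp, ← Complex.exp_add]
  congr 1
  push_cast
  ring

lemma qp_sum (N : ℕ) {ι : Type*} (s : Finset ι) (f : ι → ℚ) :
    qp N (∑ j ∈ s, f j) = ∏ j ∈ s, qp N (f j) := by
  simp only [qp, ← Complex.exp_sum]
  congr 1
  push_cast
  simp only [mul_sum, sum_div]

lemma qp_periodic (N : ℕ) : Function.Periodic (qp N) N := by
  intro r
  rcases eq_or_ne N 0 with rfl | hN
  · simp
  · have hN' : (N : ℂ) ≠ 0 := Nat.cast_ne_zero.mpr hN
    simp only [qp]
    rw [← Complex.exp_periodic.int_mul 1 (2 * (Real.pi : ℂ) * Complex.I * r / N)]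
    congr 1
    push_cast
    field_simp

theorem Function.Periodic.sum_range_add_int {M : Type*} [AddCancelCommMonoid M] {f : ℤ → M}
    {N : ℕ} (hf : Function.Periodic f N) (k : ℤ) :
    ∑ a ∈ range N, f (a + k) = ∑ a ∈ range N, f a := by
  have shift_one : ∀ g : ℤ → M, Function.Periodic g N →
      ∑ a ∈ range N, g (a + 1) = ∑ a ∈ range N, g a := by
    intro g hg
    have h := (sum_range_succ' (fun a : ℕ => g a) N).symm.trans (sum_range_succ _ N)
    push_cast at h
    rwa [show g N = g 0 by simpa using hg 0, add_left_inj] at h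
  induction k using Int.induction_on with
  | zero => simp
  | succ k ih =>
    rw [← ih, ← shift_one (fun m => f (m + k))
      fun m => by simpa only [add_right_comm] using hf (m + k)]
    simp only [add_right_comm, add_assoc]
  | pred k ih =>
    rw [← ih, ← shift_one (fun m => f (m + (-k - 1)))
      fun m => by simpa only [add_right_comm] using hf (m + (-k - 1))]
    simp only [add_assoc, add_sub_cancel]

def IsHalfOdd (x : ℚ) : Prop := ∃ k : ℤ, x = k + 1 / 2

lemma IsHalfOdd.neg {x : ℚ} (hx : IsHalfOdd x) : IsHalfOdd (-x) := by
  obtain ⟨k, rfl⟩ := hx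
  exact ⟨-k - 1, by push_cast; ring⟩

lemma IsHalfOdd.intCast_add {x : ℚ} (hx : IsHalfOdd x) (m : ℤ) : IsHalfOdd (m + x) := by
  obtain ⟨k, rfl⟩ := hx
  exact ⟨m + k, by push_cast; ring⟩

noncomputable def halfShiftGaussSum (N : ℕ) : ℂ := ∑ a ∈ range N, qp N (((a : ℚ) + 1 / 2) ^ 2)

lemma sum_range_qp_sq_add {N : ℕ} {v : ℚ} (hv : IsHalfOdd v) :
    ∑ a ∈ range N, qp N (((a : ℚ) + v) ^ 2) = halfShiftGaussSum N := by
  obtain ⟨k, rfl⟩ := hv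
  have hper : Function.Periodic (fun m : ℤ => qp N (((m : ℚ) + 1 / 2) ^ 2)) N := by
    intro m
    have h := (qp_periodic N).int_mul (2 * m + N + 1) (((m : ℚ) + 1 / 2) ^ 2)
    dsimp only
    rw [← h]
    congr 1
    push_cast
    ring
  convert hper.sum_range_add_int k using 3 with a
  · push_cast
    ring
  · simp [halfShiftGaussSum]

lemma two_mul_sum_range_half_qp_sq_add {N : ℕ} (hN4 : N % 4 = 2) {v : ℚ} (hv : IsHalfOdd v) :
    2 * ∑ a ∈ range (N / 2), qp N (((a : ℚ) + v) ^ 2) = halfShiftGaussSum N := by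
  obtain ⟨k, rfl⟩ := hv
  obtain ⟨q, hN⟩ : ∃ q, N = 4 * q + 2 := ⟨N / 4, by omega⟩
  have hhalf : N / 2 = 2 * q + 1 := by omega
  -- `(N/2 + a + v)^2 - (a + v)^2 = (N/2) (N/2 + 2a + 2v)`, and `N/2 + 2v` is even
  have hshift : ∀ a : ℕ, qp N ((((N / 2 + a : ℕ) : ℚ) + (k + 1 / 2)) ^ 2)
      = qp N (((a : ℚ) + (k + 1 / 2)) ^ 2) := by
    intro a
    rw [← (qp_periodic N).int_mul (q + 1 + a + k) (((a : ℚ) + (k + 1 / 2)) ^ 2)]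
    congr 1
    rw [hhalf, show (N : ℚ) = 4 * q + 2 by exact_mod_cast hN]
    push_cast
    ring
  have hsplit := sum_range_add (fun a : ℕ => qp N (((a : ℚ) + (k + 1 / 2)) ^ 2)) (N / 2) (N / 2)
  rw [show N / 2 + N / 2 = N by omega] at hsplit
  rw [← sum_range_qp_sq_add ⟨k, rfl⟩, hsplit]
  simp only [hshift]
  ring

lemma sum_qp_dotp_finC_add_self {n : ℕ} (N M : ℕ) (v : Fin n → ℚ) :
    ∑ lam : Fin n → Fin M, qp N (dotp (finC lam + v) (finC lam + v))
      = ∏ j, ∑ a ∈ range M, qp N (((a : ℚ) + v j) ^ 2) := by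
  simp only [dotp, qp_sum, Pi.add_apply, finC, ← sq]
  rw [← Fintype.prod_sum fun j (a : Fin M) => qp N ((((a : ℕ) : ℚ) + v j) ^ 2)]
  exact prod_congr rfl fun j _ =>
    Fin.sum_univ_eq_sum_range (fun a => qp N (((a : ℚ) + v j) ^ 2)) M

lemma sum_qp_dotp_finC_add_self_of_isHalfOdd {n : ℕ} (N : ℕ) {v : Fin n → ℚ}
    (hv : ∀ j, IsHalfOdd (v j)) :
    ∑ lam : Fin n → Fin N, qp N (dotp (finC lam + v) (finC lam + v)) = halfShiftGaussSum N ^ n := by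
  simp [sum_qp_dotp_finC_add_self, sum_range_qp_sq_add (hv _)]

lemma two_pow_mul_sum_qp_dotp_finC_add_self_of_isHalfOdd {n N : ℕ} (hN4 : N % 4 = 2)
    {v : Fin n → ℚ} (hv : ∀ j, IsHalfOdd (v j)) :
    2 ^ n * ∑ lam : Fin n → Fin (N / 2), qp N (dotp (finC lam + v) (finC lam + v))
      = halfShiftGaussSum N ^ n := by
  rw [sum_qp_dotp_finC_add_self, ← Fin.prod_const, ← Fin.prod_const, ← prod_mul_distrib]
  simp only [two_mul_sum_range_half_qp_sq_add hN4 (hv _)]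

lemma dotp_add_self {n : ℕ} (x w : Fin n → ℚ) :
    dotp (x + w) (x + w) = dotp x (x + 2 • w) + dotp w w := by
  simp only [dotp, Pi.add_apply, nsmul_eq_mul, Pi.mul_apply, Pi.natCast_apply,
    ← sum_add_distrib]
  exact sum_congr rfl fun _ _ => by push_cast; ring

lemma dotp_self_add_two_mul_dotp {n : ℕ} (x w v : Fin n → ℚ) :
    dotp x x + 2 * dotp (x + w) v = dotp (x + v) (x + v) + (2 * dotp w v - dotp v v) := by
  simp only [dotp, Pi.add_apply, mul_sum, ← sum_add_distrib, ← sum_sub_distrib]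
  exact sum_congr rfl fun _ _ => by ring

lemma dotp_Wact_self {n : ℕ} (σ : HypOct n) (x : Fin n → ℚ) :
    dotp (Wact σ x) (Wact σ x) = dotp x x := by
  have hsign : ∀ j, (((σ.2 j : ℤ) : ℚ) * x (σ.1⁻¹ j)) * (((σ.2 j : ℤ) : ℚ) * x (σ.1⁻¹ j))
      = x (σ.1⁻¹ j) * x (σ.1⁻¹ j) := fun j => by
    rcases Int.units_eq_one_or (σ.2 j) with h | h <;> simp [h]
  simp only [dotp, Wact, hsign]
  exact Equiv.sum_comp σ.1⁻¹ fun j => x j * x j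

lemma isHalfOdd_Wact {n : ℕ} (σ : HypOct n) {x : Fin n → ℚ} (hx : ∀ j, IsHalfOdd (x j))
    (j : Fin n) : IsHalfOdd (Wact σ x j) := by
  rcases Int.units_eq_one_or (σ.2 j) with h | h <;> simp [Wact, h, hx, IsHalfOdd.neg]

lemma isHalfOdd_rhoV (n : ℕ) (j : Fin n) : IsHalfOdd (rhoV n j) :=
  ⟨n - j - 1, by simp only [rhoV]; push_cast; ring⟩

lemma sumX_eq (n N : ℕ) :
    sumX n N N = qp N (-dotp (rhoV n) (rhoV n)) * halfShiftGaussSum N ^ n := by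
  have hsq : ∀ lam : Fin n → Fin N, dotp (finC lam) (finC lam + 2 • rhoV n)
      = dotp (finC lam + rhoV n) (finC lam + rhoV n) + -dotp (rhoV n) (rhoV n) := fun lam => by
    rw [dotp_add_self]; ring
  simp only [sumX, hsq, qp_add]
  rw [← sum_mul, sum_qp_dotp_finC_add_self_of_isHalfOdd N (isHalfOdd_rhoV n), mul_comm]

lemma two_pow_mul_sum_qp_dotp_finC_add_two_mul_dotp {n N : ℕ} (hN4 : N % 4 = 2)
    (w : Fin n → ℚ) {v : Fin n → ℚ} (hv : ∀ j, IsHalfOdd (v j)) :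
    2 ^ n * ∑ lam : Fin n → Fin (N / 2),
        qp N (dotp (finC lam) (finC lam) + 2 * dotp (finC lam + w) v)
      = qp N (2 * dotp w v - dotp v v) * halfShiftGaussSum N ^ n := by
  simp only [dotp_self_add_two_mul_dotp, qp_add]
  rw [← sum_mul, ← mul_assoc, two_pow_mul_sum_qp_dotp_finC_add_self_of_isHalfOdd hN4 hv, mul_comm]

lemma sumXS_eq_sum_hypOct (n N M : ℕ) (mu : Fin n → ℤ) :
    sumXS n N M mu = ∑ σ : HypOct n, ((epsW σ : ℤ) : ℂ) * ∑ lam : Fin n → Fin M,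
      qp N (dotp (finC lam) (finC lam)
        + 2 * dotp (finC lam + rhoV n) (Wact σ (intC mu + rhoV n))) := by
  simp only [sumXS, Sprime, qp_add, mul_sum]
  rw [sum_comm]
  exact sum_congr rfl fun _ _ => sum_congr rfl fun _ _ => by ring

theorem sumXS_half_eq_general (n N : ℕ) (hN4 : N % 4 = 2)
    (mu : Fin n → ℤ) :
    2 ^ n * sumXS n N (N / 2) mu =
      sumX n N N * Qmu n N mu * qp N (-(dotp (intC mu) (intC mu + 2 • rhoV n))) := by
  have hv (σ : HypOct n) : ∀ j, IsHalfOdd (Wact σ (intC mu + rhoV n) j) :=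
    isHalfOdd_Wact σ fun j => (isHalfOdd_rhoV n j).intCast_add (mu j)
  have hnorm (σ : HypOct n) : dotp (Wact σ (intC mu + rhoV n)) (Wact σ (intC mu + rhoV n))
      = dotp (intC mu) (intC mu + 2 • rhoV n) + dotp (rhoV n) (rhoV n) := by
    rw [dotp_Wact_self, dotp_add_self]
  rw [sumXS_eq_sum_hypOct, mul_sum, sumX_eq, Qmu, mul_sum, sum_mul]
  refine sum_congr rfl fun σ _ => ?_
  rw [mul_left_comm, two_pow_mul_sum_qp_dotp_finC_add_two_mul_dotp hN4 _ (hv σ), hnorm,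
    sub_eq_add_neg, neg_add, qp_add, qp_add]
  ring

/-- For `n ≥ 1`, `N ≡ 2 (mod 4)` with `N ≥ 6`, and `μ ∈ ℤ^n`,
`2^n · Σ_{λ∈X_{N/2}} q^{(λ,λ)} S'_{λ,μ} = (Σ_{λ∈X_N} q^{(λ,λ+2ρ)}) · Q_μ · q^{−(μ,μ+2ρ)}`
(with `q^r = exp(2πi r/N)` throughout). -/
theorem sumXS_half_eq (n N : ℕ) (hn : 1 ≤ n) (hN : 6 ≤ N) (hN4 : N % 4 = 2)
    (mu : Fin n → ℤ) :
    2 ^ n * sumXS n N (N / 2) mu =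
      sumX n N N * Qmu n N mu * qp N (-(dotp (intC mu) (intC mu + 2 • rhoV n))) :=
  sumXS_half_eq_general n N hN4 mu
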